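/- Let H ≥ 2 be an integer, I = {0,1,2} ∪ {2H}, and J = {0,1} ∪ {2H-1,2H}. Then |I| = |J| = 4, diam(I) = diam(J) = 2H, |hI| = |hJ| for all positive integers h < H, and |(2H-2)J| - |(2H-2)I| = (2H-1)² - (3H² - 2H) = H² - 2H + 1 > 0 (for H ≥ 3). -/

import Mathlib

open Finset Pointwise

/-- `hsum h A` is the `h`-fold sumset of `A` (pointwise sum of `h` copies). -/
def hsum (h : ℕ) (A : Finset ℤ) : Finset ℤ := ∑ _i ∈ Finset.range h, A

/-- `transl t A` is the translate `t + A`. -/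
def transl (t : ℤ) (A : Finset ℤ) : Finset ℤ := A.image (t + ·)

/-!
An `h`-fold sum from `[0, p] ∪ [c, c + q]` with `a` summands in the upper interval fills the
block `[a c, a (c + q) + (h - a) p]`. While `h · max p q < c` the `h + 1` blocks are disjoint, so
`2 |hA| = (h + 1) ((p + q) h + 2)`: this depends only on `p + q`, which is `2` both for
`I = [0, 2] ∪ [2H, 2H]` and for `J = [0, 1] ∪ [2H - 1, 2H]`. That settles `h < H`, and
`h = 2H - 2` for `J`. For `I` at `h = 2H - 2` the first `H` blocks overlap into `[0, 2H² - 2]`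
and the others form the translate of `(H - 2) I` by `2H²`, so
`|(2H - 2) I| = 2H² - 1 + (H - 1)²`.
-/

theorem Int.Icc_add_Icc {a b c d : ℤ} (hab : a ≤ b) (hcd : c ≤ d) :
    Icc a b + Icc c d = Icc (a + c) (b + d) := by
  refine (Icc_add_Icc_subset a b c d).antisymm fun x hx => ?_
  rw [mem_Icc] at hx
  exact mem_add.2 ⟨min b (x - c), by simp [mem_Icc]; omega, x - min b (x - c),
    by simp [mem_Icc]; omega, by ring⟩

theorem Finset.biUnion_add {ι α : Type*} [DecidableEq α] [Add α] (s : Finset ι)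
    (f : ι → Finset α) (t : Finset α) : s.biUnion f + t = s.biUnion fun i => f i + t := by
  ext x
  simp only [mem_add, mem_biUnion]
  grind

theorem Finset.biUnion_range_union_succ {α : Type*} [DecidableEq α] (f : ℕ → Finset α)
    (n : ℕ) :
    (range (n + 1)).biUnion (fun a => f a ∪ f (a + 1)) = (range (n + 2)).biUnion f := by
  ext x
  simp only [mem_biUnion, mem_range, mem_union]
  constructor
  · rintro ⟨a, ha, hx | hx⟩
    exacts [⟨a, by omega, hx⟩, ⟨a + 1, by omega, hx⟩]
  · rintro ⟨_ | a, ha, hx⟩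
    exacts [⟨0, by omega, .inl hx⟩, ⟨a, by omega, .inr hx⟩]

theorem hsum_zero (A : Finset ℤ) : hsum 0 A = {0} := rfl

theorem hsum_succ (h : ℕ) (A : Finset ℤ) : hsum (h + 1) A = hsum h A + A :=
  sum_range_succ _ _

theorem hsum_Icc_union_Icc {p q : ℤ} (hp : 0 ≤ p) (hq : 0 ≤ q) (c : ℤ) (h : ℕ) :
    hsum h (Icc 0 p ∪ Icc c (c + q)) =
      (range (h + 1)).biUnion fun a => Icc (a * c) (a * (c + q) + (h - a) * p) := by
  induction h with
  | zero => ext; simp [hsum_zero]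
  | succ n ih =>
    rw [hsum_succ, ih, biUnion_add, ← biUnion_range_union_succ]
    refine biUnion_congr rfl fun a ha => ?_
    have han : (a : ℤ) ≤ n := by simp at ha; omega
    have hle : (a : ℤ) * c ≤ a * (c + q) + (n - a) * p := by nlinarith
    rw [add_union, Int.Icc_add_Icc hle hp, Int.Icc_add_Icc hle (by omega)]
    push_cast
    congr 2 <;> ring

theorem nonneg_of_mem_hsum {A : Finset ℤ} (hA : ∀ x ∈ A, 0 ≤ x) {h : ℕ} {x : ℤ}
    (hx : x ∈ hsum h A) : 0 ≤ x := by
  induction h generalizing x with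
  | zero => simp_all [hsum_zero]
  | succ n ih =>
    obtain ⟨y, hy, z, hz, rfl⟩ := mem_add.1 (hsum_succ n A ▸ hx)
    exact add_nonneg (ih hy) (hA z hz)

theorem Finset.natCast_card_biUnion_Icc {ι : Type*} [LinearOrder ι] {s : Finset ι}
    {f g : ι → ℤ} (hfg : ∀ i ∈ s, f i ≤ g i + 1)
    (hsep : ∀ i ∈ s, ∀ j ∈ s, i < j → g i < f j) :
    ((s.biUnion fun i => Icc (f i) (g i)).card : ℤ) = ∑ i ∈ s, (g i + 1 - f i) := by
  rw [card_biUnion]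
  · push_cast
    exact sum_congr rfl fun i hi => Int.card_Icc_of_le _ _ (hfg i hi)
  · intro i hi j hj hij
    rw [Function.onFun, disjoint_left]
    intro x hxi hxj
    rw [mem_Icc] at hxi hxj
    rcases hij.lt_or_gt with h | h
    · linarith [hsep i hi j hj h]
    · linarith [hsep j hj i hi h]

theorem Finset.biUnion_range_Icc_of_monotone {L U : ℕ → ℤ} (hL : Monotone L) (hU : Monotone U)
    (n : ℕ) (hgap : ∀ m < n, L (m + 1) ≤ U m + 1) :
    (range (n + 1)).biUnion (fun a => Icc (L a) (U a)) = Icc (L 0) (U n) := by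
  induction n with
  | zero => simp
  | succ m ih =>
    rw [range_add_one, biUnion_insert, ih fun k hk => hgap k (by omega)]
    have h0 := hL (Nat.zero_le (m + 1))
    have hm := hU (Nat.le_add_right m 1)
    have hgap_m := hgap m (by omega)
    ext x
    simp only [mem_union, mem_Icc]
    omega

theorem two_mul_sum_range_length (h : ℕ) (p q : ℤ) :
    2 * ∑ a ∈ range (h + 1), ((a : ℤ) * q + (h - a) * p + 1) =
      (h + 1) * ((p + q) * h + 2) := by
  have gauss : (∑ a ∈ range (h + 1), (a : ℤ)) * 2 = (h + 1) * h := by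
    have := sum_range_id_mul_two (h + 1)
    rw [Nat.add_sub_cancel] at this
    rw [← Nat.cast_sum]
    exact_mod_cast this
  have hsplit : ∑ a ∈ range (h + 1), ((a : ℤ) * q + (h - a) * p + 1)
      = (∑ a ∈ range (h + 1), (a : ℤ)) * (q - p) + (h + 1) * (h * p + 1) := by
    rw [sum_mul,
      show ((h : ℤ) + 1) * (h * p + 1) = ∑ _a ∈ range (h + 1), ((h : ℤ) * p + 1) by simp,
      ← sum_add_distrib]
    exact sum_congr rfl fun a _ => by ring
  rw [hsplit]
  linear_combination (q - p) * gauss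

theorem two_mul_card_hsum_Icc_union_Icc {p q c : ℤ} (hp : 0 ≤ p) (hq : 0 ≤ q) {h : ℕ}
    (hpc : h * p < c) (hqc : h * q < c) :
    2 * ((hsum h (Icc 0 p ∪ Icc c (c + q))).card : ℤ) = (h + 1) * ((p + q) * h + 2) := by
  have hlen : ∀ a ≤ h, (a : ℤ) * q + (h - a) * p < c := by
    intro a ha
    have ha' : (a : ℤ) ≤ h := by exact_mod_cast ha
    rcases le_total p q with hpq | hqp
    · nlinarith [mul_nonneg (sub_nonneg.2 ha') (sub_nonneg.2 hpq)]
    · nlinarith [mul_nonneg (Nat.cast_nonneg (α := ℤ) a) (sub_nonneg.2 hqp)]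
  rw [hsum_Icc_union_Icc hp hq, natCast_card_biUnion_Icc, ← two_mul_sum_range_length]
  · congr 1
    exact sum_congr rfl fun a _ => by ring
  · intro a ha
    have ha' : (a : ℤ) ≤ h := by simp at ha; omega
    nlinarith
  · intro a ha b hb hab
    have hab' : (a : ℤ) + 1 ≤ b := by exact_mod_cast hab
    have hc : 0 ≤ c := by nlinarith [mul_nonneg (Nat.cast_nonneg (α := ℤ) h) hp]
    nlinarith [hlen a (by simp at ha; omega), mul_le_mul_of_nonneg_right hab' hc]

theorem hsum_two_mul_sub_two_Icc_zero_two_union (H : ℕ) (hH : 2 ≤ H) :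
    hsum (2 * H - 2) (Icc 0 2 ∪ Icc (2 * H) (2 * H + 0)) =
      Icc 0 (2 * (H : ℤ) ^ 2 - 2) ∪
        transl (2 * H ^ 2) (hsum (H - 2) (Icc 0 2 ∪ Icc (2 * H) (2 * H + 0))) := by
  obtain ⟨k, rfl⟩ := Nat.exists_eq_add_of_le' hH
  have hrange : range (2 * (k + 2) - 2 + 1) =
      range (k + 1 + 1) ∪ (range (k + 1)).map (addLeftEmbedding (k + 2)) := by
    rw [← range_add]; congr 1; omega
  rw [hsum_Icc_union_Icc zero_le_two le_rfl, hsum_Icc_union_Icc zero_le_two le_rfl, transl,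
    biUnion_image, hrange, union_biUnion, map_eq_image, image_biUnion,
    biUnion_range_Icc_of_monotone, Nat.add_sub_cancel]
  · congr 1
    · push_cast [show 2 * (k + 2) - 2 = 2 * k + 2 by omega]; congr 1 <;> ring
    · refine biUnion_congr rfl fun a _ => ?_
      rw [image_add_left_Icc]
      push_cast [addLeftEmbedding_apply, show 2 * (k + 2) - 2 = 2 * k + 2 by omega]
      congr 1 <;> ring
  · intro a b hab
    dsimp only
    gcongr
  · refine monotone_nat_of_le_succ fun a => ?_
    push_cast
    linarith
  · intro m hm
    have hm' : (m : ℤ) ≤ k := by omega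
    push_cast [show 2 * (k + 2) - 2 = 2 * k + 2 by omega]
    linarith

theorem card_hsum_two_mul_sub_two_Icc_zero_two_union (H : ℕ) (hH : 2 ≤ H) :
    ((hsum (2 * H - 2) (Icc 0 2 ∪ Icc (2 * H) (2 * H + 0))).card : ℤ) =
      3 * H ^ 2 - 2 * H := by
  have hsmall := two_mul_card_hsum_Icc_union_Icc (p := 2) (q := 0) (c := 2 * H) (h := H - 2)
    zero_le_two le_rfl (by push_cast [Nat.cast_sub hH]; linarith) (by simp; omega)
  have hpos : (0 : ℤ) ≤ 2 * H ^ 2 - 2 + 1 := by nlinarith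
  rw [hsum_two_mul_sub_two_Icc_zero_two_union H hH, card_union_of_disjoint, transl,
    card_image_of_injective _ (add_right_injective _)]
  · push_cast [Nat.cast_sub hH] at hsmall ⊢
    rw [Int.card_Icc_of_le _ _ (by linarith)]
    linarith
  · rw [disjoint_left]
    intro x hx hx'
    obtain ⟨y, hy, rfl⟩ := mem_image.1 hx'
    have := nonneg_of_mem_hsum (fun z hz => by simp at hz; omega) hy
    rw [mem_Icc] at hx
    linarith

theorem Finset.max'_sub_min'_eq {α : Type*} [LinearOrder α] [Sub α] {s : Finset α}
    (hs : s.Nonempty) {a b : α} (ha : a ∈ s) (hb : b ∈ s)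
    (hab : ∀ x ∈ s, a ≤ x ∧ x ≤ b) :
    s.max' hs - s.min' hs = b - a := by
  rw [le_antisymm (s.max'_le hs _ fun x hx => (hab x hx).2) (s.le_max' b hb),
    le_antisymm (s.min'_le a ha) (s.le_min' hs _ fun x hx => (hab x hx).1)]

theorem stmt_9 (H : ℕ) (hH : 2 ≤ H)
    (I J : Finset ℤ) (hI : I = {0, 1, 2} ∪ {2 * (H : ℤ)})
    (hJ : J = {0, 1} ∪ {2 * (H : ℤ) - 1, 2 * (H : ℤ)})
    (hIne : I.Nonempty) (hJne : J.Nonempty) :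
    I.card = 4 ∧ J.card = 4 ∧
    I.max' hIne - I.min' hIne = 2 * (H : ℤ) ∧
    J.max' hJne - J.min' hJne = 2 * (H : ℤ) ∧
    (∀ h : ℕ, 1 ≤ h → h < H → (hsum h I).card = (hsum h J).card) ∧
    (((hsum (2 * H - 2) J).card : ℤ) - ((hsum (2 * H - 2) I).card : ℤ) =
        (2 * (H : ℤ) - 1) ^ 2 - (3 * (H : ℤ) ^ 2 - 2 * H) ∧
      (2 * (H : ℤ) - 1) ^ 2 - (3 * (H : ℤ) ^ 2 - 2 * H) = (H : ℤ) ^ 2 - 2 * H + 1 ∧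
      (3 ≤ H → 0 < (H : ℤ) ^ 2 - 2 * H + 1)) := by
  have hI' : I = Icc 0 2 ∪ Icc (2 * (H : ℤ)) (2 * H + 0) := by
    rw [hI]; ext x; simp; omega
  have hJ' : J = Icc 0 1 ∪ Icc (2 * (H : ℤ) - 1) (2 * H - 1 + 1) := by
    rw [hJ]; ext x; simp; omega
  have hcardI : ∀ h : ℕ, h < H → 2 * ((hsum h I).card : ℤ) = (h + 1) * (2 * h + 2) := by
    intro h hh
    rw [hI', two_mul_card_hsum_Icc_union_Icc zero_le_two le_rfl] <;> push_cast <;> linarith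
  have hcardJ :
      ∀ h : ℕ, h ≤ 2 * H - 2 → 2 * ((hsum h J).card : ℤ) = (h + 1) * (2 * h + 2) := by
    intro h hh
    rw [hJ', two_mul_card_hsum_Icc_union_Icc zero_le_one zero_le_one] <;> push_cast <;> omega
  refine ⟨?_, ?_, ?_, ?_, fun h _ hh => ?_, ?_, by ring, fun h3 => by nlinarith⟩
  · rw [hI, card_union_of_disjoint (disjoint_singleton_right.2 (by simp; omega)), card_singleton]
    rfl
  · rw [hJ, card_union_of_disjoint (by simp; omega), card_pair zero_ne_one, card_pair (by omega)]
  · rw [max'_sub_min'_eq hIne (a := 0) (b := 2 * H) (by simp [hI]) (by simp [hI]), sub_zero]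
    intro x hx
    simp [hI] at hx
    omega
  · rw [max'_sub_min'_eq hJne (a := 0) (b := 2 * H) (by simp [hJ]) (by simp [hJ]), sub_zero]
    intro x hx
    simp [hJ] at hx
    omega
  · have := hcardI h hh
    have := hcardJ h (by omega)
    exact_mod_cast (by linarith : ((hsum h I).card : ℤ) = (hsum h J).card)
  · have hJcard := hcardJ (2 * H - 2) le_rfl
    rw [hI', card_hsum_two_mul_sub_two_Icc_zero_two_union H hH]
    push_cast [Nat.cast_sub (by omega : 2 ≤ 2 * H)] at hJcard
    linarith
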